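/- Let c ∈ (−√2, √2). If g : ℝ → ℝ is continuously differentiable, bounded, and satisfies S_c* g = 0, i.e. −g'(x) + √2·R_c(x)·g(x) = 0 for all x, then g ≡ 0. Consequently, for a given continuously differentiable f with f, f' bounded and ∫_ℝ f·Q_c = 0, the function g(x) = (1/Q_c(x))·∫_x^∞ f·Q_c is the unique bounded C¹ solution of S_c* g = f. -/

import Mathlib

/-!
`Q_c` is an integrating factor for `S_c*`: `Q_c' = -√2 R_c Q_c`, so `S_c* h = f` says exactly
`(Q_c h)' = -f Q_c`. As `Q_c` decays like `e^{-βx}` and `h` is bounded, `Q_c h → 0` at `+∞`, and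
integrating over `(x, ∞)` gives `Q_c(x) h(x) = ∫_x^∞ f Q_c`. Both claims follow since `Q_c > 0`.
-/

open Real MeasureTheory

/-- The real part of the traveling-wave profile. -/
noncomputable def Rc (c x : ℝ) : ℝ :=
  Real.sqrt ((2 - c ^ 2) / 2) * Real.tanh (Real.sqrt (2 - c ^ 2) * x / 2)

/-- The soliton profile `Q_c(x) = (β²/2) sech²(βx/2)` with `β = √(2 - c²)`. -/
noncomputable def Q (c x : ℝ) : ℝ :=
  (Real.sqrt (2 - c ^ 2)) ^ 2 / 2
    * ((Real.cosh (Real.sqrt (2 - c ^ 2) * x / 2))⁻¹) ^ 2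

open Filter Set Topology

theorem mul_eq_integral_Ioi_of_neg_deriv_add_mul_eq {w r f h : ℝ → ℝ} {x : ℝ}
    (hw : ∀ y, HasDerivAt w (-(r y) * w y) y) (hw_int : IntegrableOn w (Ioi x))
    (hw_lim : Tendsto w atTop (𝓝 0)) (hf : Continuous f) (hf_bdd : ∃ M, ∀ y, |f y| ≤ M)
    (hh : Differentiable ℝ h) (hh_bdd : ∃ M, ∀ y, |h y| ≤ M)
    (hode : ∀ y, -deriv h y + r y * h y = f y) :
    w x * h x = ∫ y in Ioi x, f y * w y := by
  obtain ⟨Mf, hMf⟩ := hf_bdd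
  obtain ⟨Mh, hMh⟩ := hh_bdd
  have hderiv : ∀ y ∈ Ici x, HasDerivAt (fun z => w z * h z) (-(f y * w y)) y := by
    intro y _
    have hh' : HasDerivAt h (r y * h y - f y) y := by
      rw [show r y * h y - f y = deriv h y by linarith [hode y]]
      exact (hh y).hasDerivAt
    exact ((hw y).fun_mul hh').congr_deriv (by ring)
  have hint : IntegrableOn (fun y => f y * w y) (Ioi x) :=
    hw_int.bdd_mul (c := Mf) hf.aestronglyMeasurable.restrict
      (Eventually.of_forall fun y => (Real.norm_eq_abs (f y)) ▸ hMf y)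
  have hlim : Tendsto (fun y => w y * h y) atTop (𝓝 0) := by
    refine squeeze_zero_norm (fun y => ?_) (by simpa using hw_lim.norm.mul_const Mh)
    rw [norm_mul]
    exact mul_le_mul_of_nonneg_left ((Real.norm_eq_abs _).trans_le (hMh y)) (norm_nonneg _)
  have := integral_Ioi_of_hasDerivAt_of_tendsto' hderiv hint.neg hlim
  rw [integral_neg] at this
  linarith

theorem sqrt_two_mul_Rc (c x : ℝ) :
    √2 * Rc c x = √(2 - c ^ 2) * tanh (√(2 - c ^ 2) * x / 2) := by
  rw [Rc, ← mul_assoc, ← Real.sqrt_mul zero_le_two, mul_div_cancel₀ _ two_ne_zero]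

theorem sqrt_two_sub_sq_pos {c : ℝ} (hc : c ^ 2 < 2) : 0 < √(2 - c ^ 2) :=
  Real.sqrt_pos.2 (by linarith)

theorem Q_pos {c : ℝ} (hc : c ^ 2 < 2) (x : ℝ) : 0 < Q c x := by
  have hβ := sqrt_two_sub_sq_pos hc
  have hcosh := cosh_pos (√(2 - c ^ 2) * x / 2)
  unfold Q
  positivity

theorem hasDerivAt_Q (c x : ℝ) : HasDerivAt (Q c) (-(√2 * Rc c x) * Q c x) x := by
  set β := √(2 - c ^ 2) with hβ
  have hcosh : HasDerivAt (fun y => cosh (β * y / 2)) (sinh (β * x / 2) * (β / 2)) x :=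
    (((hasDerivAt_id x).const_mul β).div_const 2).cosh.congr_deriv (by simp)
  have hne := (Real.cosh_pos (β * x / 2)).ne'
  refine (((hcosh.inv hne).pow 2).const_mul (β ^ 2 / 2)).congr_deriv ?_
  rw [sqrt_two_mul_Rc, Q, Real.tanh_eq_sinh_div_cosh, Pi.inv_apply, ← hβ]
  simp only [Nat.cast_ofNat, Nat.add_one_sub_one, pow_one]
  field_simp

theorem Q_le_exp (c x : ℝ) : Q c x ≤ 2 * √(2 - c ^ 2) ^ 2 * exp (-√(2 - c ^ 2) * x) := by
  set β := √(2 - c ^ 2)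
  rw [Q]
  have hcosh : exp (β * x / 2) / 2 ≤ cosh (β * x / 2) := by
    rw [Real.cosh_eq]
    linarith [Real.exp_pos (-(β * x / 2))]
  have hsech : (cosh (β * x / 2))⁻¹ ≤ 2 * exp (-(β * x / 2)) := by
    calc (cosh (β * x / 2))⁻¹ ≤ (exp (β * x / 2) / 2)⁻¹ := inv_anti₀ (by positivity) hcosh
      _ = 2 * exp (-(β * x / 2)) := by rw [Real.exp_neg]; field_simp
  have hexp : exp (-β * x) = exp (-(β * x / 2)) ^ 2 := by rw [← Real.exp_nat_mul]; ring_nf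
  rw [hexp]
  calc β ^ 2 / 2 * (cosh (β * x / 2))⁻¹ ^ 2 ≤ β ^ 2 / 2 * (2 * exp (-(β * x / 2))) ^ 2 := by
        gcongr
    _ = _ := by ring

theorem integrableOn_Ioi_Q {c : ℝ} (hc : c ^ 2 < 2) (a : ℝ) : IntegrableOn (Q c) (Ioi a) := by
  refine ((exp_neg_integrableOn_Ioi a (sqrt_two_sub_sq_pos hc)).const_mul
    (2 * √(2 - c ^ 2) ^ 2)).mono' ?_ ?_
  · exact (continuous_iff_continuousAt.2 fun x =>
      (hasDerivAt_Q c x).continuousAt).aestronglyMeasurable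
  · filter_upwards with x
    rw [Real.norm_of_nonneg (Q_pos hc x).le]
    exact Q_le_exp c x

theorem tendsto_Q_atTop {c : ℝ} (hc : c ^ 2 < 2) : Tendsto (Q c) atTop (𝓝 0) := by
  have hexp : Tendsto (fun x => exp (-√(2 - c ^ 2) * x)) atTop (𝓝 0) :=
    tendsto_exp_atBot.comp
      (tendsto_id.const_mul_atTop_of_neg (neg_lt_zero.2 (sqrt_two_sub_sq_pos hc)))
  exact squeeze_zero (fun x => (Q_pos hc x).le) (Q_le_exp c) (by simpa using hexp.const_mul _)

/-- The only bounded `C¹` solution of `S_c* g = 0` is `g ≡ 0`; consequently,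
for `f` as in the inversion lemma, `g(x) = Q_c(x)⁻¹ ∫_x^∞ f Q_c` is the unique
bounded `C¹` solution of `S_c* g = f`. -/
theorem Sst_uniqueness (c : ℝ)
    (hc : c ∈ Set.Ioo (-Real.sqrt 2) (Real.sqrt 2)) :
    (∀ g : ℝ → ℝ, ContDiff ℝ 1 g → (∃ M, ∀ x, |g x| ≤ M) →
      (∀ x, -deriv g x + Real.sqrt 2 * Rc c x * g x = 0) →
      ∀ x, g x = 0) ∧
    (∀ f : ℝ → ℝ, ContDiff ℝ 1 f →
      (∃ M, ∀ x, |f x| ≤ M) → (∃ M, ∀ x, |deriv f x| ≤ M) →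
      (∫ y, f y * Q c y) = 0 →
      ∀ h : ℝ → ℝ, ContDiff ℝ 1 h → (∃ M, ∀ x, |h x| ≤ M) →
        (∀ x, -deriv h x + Real.sqrt 2 * Rc c x * h x = f x) →
        ∀ x, h x = (Q c x)⁻¹ * ∫ y in Set.Ioi x, f y * Q c y) := by
  have hc2 : c ^ 2 < 2 := by
    simpa [Real.sq_sqrt zero_le_two] using sq_lt_sq' hc.1 hc.2
  have hsol : ∀ f h : ℝ → ℝ, Continuous f → (∃ M, ∀ x, |f x| ≤ M) → ContDiff ℝ 1 h →
      (∃ M, ∀ x, |h x| ≤ M) → (∀ x, -deriv h x + √2 * Rc c x * h x = f x) →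
      ∀ x, Q c x * h x = ∫ y in Ioi x, f y * Q c y :=
    fun f h hf hf_bdd hh hh_bdd hode x =>
      mul_eq_integral_Ioi_of_neg_deriv_add_mul_eq (hasDerivAt_Q c) (integrableOn_Ioi_Q hc2 x)
        (tendsto_Q_atTop hc2) hf hf_bdd (hh.differentiable one_ne_zero) hh_bdd hode
  refine ⟨fun g hg hg_bdd hode x => ?_, fun f hf hf_bdd _ _ h hh hh_bdd hode x => ?_⟩
  · have := hsol 0 g continuous_const ⟨0, by simp⟩ hg hg_bdd hode x
    simpa [(Q_pos hc2 x).ne'] using this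
  · rw [eq_inv_mul_iff_mul_eq₀ (Q_pos hc2 x).ne']
    exact hsol f h hf.continuous hf_bdd hh hh_bdd hode x
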